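/- Let y be a meromorphic function on ℂ satisfying y(z+1) + y(z−1) = (b(z) y(z) + c(z))/y(z)² as an identity of meromorphic functions, where b and c are rational functions. Let ẑ ∈ ℂ be such that b and c are analytic at ẑ, ẑ+1, and ẑ+2, with c(ẑ) ≠ 0. Suppose y has a zero of order k ≥ 1 at ẑ, and that at ẑ − 1 the function y is either analytic or has a pole of order strictly less than k. Then: (i) y has a pole of order exactly 2k at ẑ + 1; (ii) y has a zero of order exactly k at ẑ + 2; and (iii) if moreover c(ẑ+2) ≠ c(ẑ), then y has a pole of order exactly 2k at ẑ + 3. -/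

import Mathlib

/-!
Write `y z = a (z - w) ^ n + O((z - w) ^ (n + 1))` near each point `w`. Near a zero of order
`k` with leading coefficient `a`, the right-hand side `(b y + c) / y²` has a pole of order `2k`
with leading coefficient `c(ẑ) / a²`, and `y(z - 1)` is too small to cancel it, so `y(z + 1)`
inherits this double pole. Near that pole the right-hand side vanishes to order `2k`, hence
`y(z + 1) ≈ -y(z - 1)` is again a zero of order `k`, now with coefficient `-a`. One step further
both `(b y + c) / y²` and `y(z - 1)` have poles of order `2k`, with leading coefficients
`c(ẑ + 2) / a²` and `c(ẑ) / a²`; they cancel exactly when `c(ẑ + 2) = c(ẑ)`.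
-/

/-- Two functions agree off some countable set; for meromorphic functions on `ℂ` this is
equality as meromorphic functions. -/
def EqOffCountable (f g : ℂ → ℂ) : Prop :=
  ∃ S : Set ℂ, S.Countable ∧ ∀ z ∉ S, f z = g z

open Classical in
/-- The order of a meromorphic function at a point: positive order `k` is a zero of order
`k`, negative order `-m` is a pole of order `m` (junk value `0` if `f` is not meromorphic
at the point). -/
noncomputable def meroOrder (f : ℂ → ℂ) (z : ℂ) : WithTop ℤ :=
  if h : MeromorphicAt f z then meromorphicOrderAt f z else 0

open Filter Topology

/-- `f z = a (z - x) ^ n + O((z - x) ^ (n + 1))` near `x`; the coefficient `a` may vanish. -/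
def HasLeadingTermAt {𝕜 : Type*} [NontriviallyNormedField 𝕜] (f : 𝕜 → 𝕜) (x : 𝕜) (n : ℤ)
    (a : 𝕜) : Prop :=
  ∃ g : 𝕜 → 𝕜, AnalyticAt 𝕜 g x ∧ g x = a ∧ ∀ᶠ z in 𝓝[≠] x, f z = (z - x) ^ n * g z

namespace HasLeadingTermAt

variable {𝕜 : Type*} [NontriviallyNormedField 𝕜] {f g : 𝕜 → 𝕜} {x a b : 𝕜} {n m : ℤ}

theorem of_analyticAt (hf : AnalyticAt 𝕜 f x) : HasLeadingTermAt f x 0 (f x) :=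
  ⟨f, hf, rfl, Eventually.of_forall fun z => by simp⟩

theorem congr_nhdsNE (h : HasLeadingTermAt f x n a) (hfg : f =ᶠ[𝓝[≠] x] g) :
    HasLeadingTermAt g x n a := by
  obtain ⟨G, hG, hGx, hfG⟩ := h
  exact ⟨G, hG, hGx, hfg.symm.trans hfG⟩

theorem mono (h : HasLeadingTermAt f x m a) (hnm : n < m) : HasLeadingTermAt f x n 0 := by
  obtain ⟨G, hG, -, hfG⟩ := h
  refine ⟨fun z => (z - x) ^ (m - n) * G z,
    ((analyticAt_id.sub analyticAt_const).zpow_nonneg (by omega)).mul hG,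
    by simp [zero_zpow _ (sub_ne_zero.2 hnm.ne')], ?_⟩
  filter_upwards [hfG, self_mem_nhdsWithin] with z hz hzx
  rw [hz, ← mul_assoc, ← zpow_add₀ (sub_ne_zero.2 hzx), add_sub_cancel]

theorem add (hf : HasLeadingTermAt f x n a) (hg : HasLeadingTermAt g x n b) :
    HasLeadingTermAt (f + g) x n (a + b) := by
  obtain ⟨F, hF, rfl, hfF⟩ := hf
  obtain ⟨G, hG, rfl, hgG⟩ := hg
  refine ⟨F + G, hF.add hG, rfl, ?_⟩
  filter_upwards [hfF, hgG] with z hfz hgz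
  simp [hfz, hgz, mul_add]

theorem sub (hf : HasLeadingTermAt f x n a) (hg : HasLeadingTermAt g x n b) :
    HasLeadingTermAt (f - g) x n (a - b) := by
  obtain ⟨F, hF, rfl, hfF⟩ := hf
  obtain ⟨G, hG, rfl, hgG⟩ := hg
  refine ⟨F - G, hF.sub hG, rfl, ?_⟩
  filter_upwards [hfF, hgG] with z hfz hgz
  simp [hfz, hgz, mul_sub]

theorem mul (hf : HasLeadingTermAt f x n a) (hg : HasLeadingTermAt g x m b) :
    HasLeadingTermAt (f * g) x (n + m) (a * b) := by
  obtain ⟨F, hF, rfl, hfF⟩ := hf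
  obtain ⟨G, hG, rfl, hgG⟩ := hg
  refine ⟨F * G, hF.mul hG, rfl, ?_⟩
  filter_upwards [hfF, hgG, self_mem_nhdsWithin] with z hfz hgz hzx
  simp only [Pi.mul_apply, hfz, hgz, zpow_add₀ (sub_ne_zero.2 hzx)]
  ring

theorem inv (hf : HasLeadingTermAt f x n a) (ha : a ≠ 0) :
    HasLeadingTermAt f⁻¹ x (-n) a⁻¹ := by
  obtain ⟨F, hF, rfl, hfF⟩ := hf
  refine ⟨F⁻¹, hF.inv ha, rfl, ?_⟩
  filter_upwards [hfF] with z hfz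
  simp [hfz, zpow_neg, mul_comm]

theorem comp_add_const (c : 𝕜) (h : HasLeadingTermAt f (x + c) n a) :
    HasLeadingTermAt (fun z => f (z + c)) x n a := by
  obtain ⟨G, hG, rfl, hfG⟩ := h
  refine ⟨fun z => G (z + c), hG.comp_of_eq (analyticAt_id.add analyticAt_const) rfl, rfl, ?_⟩
  rw [← Filter.map_add_right_nhdsNE, eventually_map] at hfG
  filter_upwards [hfG] with z hz
  rw [hz, add_sub_add_right_eq_sub]

theorem comp_sub_const (c : 𝕜) (h : HasLeadingTermAt f (x - c) n a) :
    HasLeadingTermAt (fun z => f (z - c)) x n a := by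
  rw [sub_eq_add_neg] at h
  simpa [sub_eq_add_neg] using h.comp_add_const (-c)

theorem of_comp_add_const (c : 𝕜) (h : HasLeadingTermAt (fun z => f (z + c)) x n a) :
    HasLeadingTermAt f (x + c) n a := by
  have h' : HasLeadingTermAt (fun z => f (z + c)) (x + c - c) n a := by
    rwa [add_sub_cancel_right]
  simpa using h'.comp_sub_const c

theorem meromorphicAt (h : HasLeadingTermAt f x n a) : MeromorphicAt f x := by
  obtain ⟨G, hG, -, hfG⟩ := h
  exact ((MeromorphicAt.id x).sub (.const _ x)).zpow n |>.mul hG.meromorphicAt |>.congr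
    (hfG.mono fun z hz => hz.symm)

theorem meromorphicOrderAt_eq (h : HasLeadingTermAt f x n a) (ha : a ≠ 0) :
    meromorphicOrderAt f x = n := by
  obtain ⟨G, hG, rfl, hfG⟩ := id h
  exact (meromorphicOrderAt_eq_int_iff h.meromorphicAt).2 ⟨G, hG, ha, by simpa using hfG⟩

theorem exists_of_meromorphicOrderAt_eq (hf : MeromorphicAt f x)
    (h : meromorphicOrderAt f x = n) : ∃ a ≠ 0, HasLeadingTermAt f x n a := by
  obtain ⟨G, hG, hGx, hfG⟩ := (meromorphicOrderAt_eq_int_iff hf).1 h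
  exact ⟨G x, hGx, G, hG, rfl, by simpa using hfG⟩

theorem of_lt_meromorphicOrderAt (hf : MeromorphicAt f x)
    (h : (n : WithTop ℤ) < meromorphicOrderAt f x) : HasLeadingTermAt f x n 0 := by
  cases hord : meromorphicOrderAt f x with
  | top =>
    refine ⟨0, analyticAt_const, rfl, ?_⟩
    filter_upwards [meromorphicOrderAt_eq_top_iff.1 hord] with z hz
    simp [hz]
  | coe m =>
    obtain ⟨a, -, hfa⟩ := exists_of_meromorphicOrderAt_eq hf hord
    exact hfa.mono (by rw [hord] at h; exact_mod_cast h)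

end HasLeadingTermAt

section Recurrence

variable {𝕜 : Type*} [NontriviallyNormedField 𝕜] {B C y : 𝕜 → 𝕜} {x w a b : 𝕜} {n : ℤ}

def recurrenceRhs (B C y : 𝕜 → 𝕜) : 𝕜 → 𝕜 := fun z => (B z * y z + C z) / y z ^ 2

theorem recurrenceRhs_eq (B C y : 𝕜 → 𝕜) :
    recurrenceRhs B C y = B * y⁻¹ + C * (y⁻¹ * y⁻¹) := by
  ext z
  by_cases hy : y z = 0
  · simp [recurrenceRhs, hy]
  · simp only [recurrenceRhs, Pi.add_apply, Pi.mul_apply, Pi.inv_apply]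
    field_simp

theorem HasLeadingTermAt.recurrenceRhs_of_zero (hB : AnalyticAt 𝕜 B x) (hC : AnalyticAt 𝕜 C x)
    (hy : HasLeadingTermAt y x n a) (ha : a ≠ 0) (hn : 0 < n) :
    HasLeadingTermAt (recurrenceRhs B C y) x (-(2 * n)) (C x / a ^ 2) := by
  have hinv := hy.inv ha
  have hBy := ((HasLeadingTermAt.of_analyticAt hB).mul hinv).mono (n := -(2 * n)) (by omega)
  have hCy : HasLeadingTermAt (C * (y⁻¹ * y⁻¹)) x (-(2 * n)) (C x * (a⁻¹ * a⁻¹)) :=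
    (by ring : 0 + (-n + -n) = -(2 * n)) ▸ (HasLeadingTermAt.of_analyticAt hC).mul (hinv.mul hinv)
  rw [recurrenceRhs_eq]
  convert hBy.add hCy using 1
  ring

theorem HasLeadingTermAt.recurrenceRhs_of_pole (hB : AnalyticAt 𝕜 B x) (hC : AnalyticAt 𝕜 C x)
    (hy : HasLeadingTermAt y x (-n) a) (ha : a ≠ 0) (hn : 0 < n) :
    HasLeadingTermAt (recurrenceRhs B C y) x n (B x / a) := by
  have hinv := hy.inv ha
  have hBy : HasLeadingTermAt (B * y⁻¹) x n (B x * a⁻¹) :=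
    (by ring : 0 + -(-n) = n) ▸ (HasLeadingTermAt.of_analyticAt hB).mul hinv
  have hCy := ((HasLeadingTermAt.of_analyticAt hC).mul (hinv.mul hinv)).mono (n := n) (by omega)
  rw [recurrenceRhs_eq]
  convert hBy.add hCy using 1
  ring

theorem HasLeadingTermAt.add_one_of_recurrence
    (hrec : (fun z => y (z + 1) + y (z - 1)) =ᶠ[𝓝[≠] w] recurrenceRhs B C y)
    (hR : HasLeadingTermAt (recurrenceRhs B C y) w n a) (hprev : HasLeadingTermAt y (w - 1) n b) :
    HasLeadingTermAt y (w + 1) n (a - b) := by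
  refine HasLeadingTermAt.of_comp_add_const 1 ((hR.sub (hprev.comp_sub_const 1)).congr_nhdsNE ?_)
  filter_upwards [hrec] with z hz
  simp [← hz]

theorem HasLeadingTermAt.pole_of_zero
    (hrec : (fun z => y (z + 1) + y (z - 1)) =ᶠ[𝓝[≠] w] recurrenceRhs B C y)
    (hB : AnalyticAt 𝕜 B w) (hC : AnalyticAt 𝕜 C w) (hy : HasLeadingTermAt y w n a) (ha : a ≠ 0)
    (hn : 0 < n) (hprev : HasLeadingTermAt y (w - 1) (-(2 * n)) b) :
    HasLeadingTermAt y (w + 1) (-(2 * n)) (C w / a ^ 2 - b) :=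
  (hy.recurrenceRhs_of_zero hB hC ha hn).add_one_of_recurrence hrec hprev

theorem HasLeadingTermAt.zero_of_pole
    (hrec : (fun z => y (z + 1) + y (z - 1)) =ᶠ[𝓝[≠] w] recurrenceRhs B C y)
    (hB : AnalyticAt 𝕜 B w) (hC : AnalyticAt 𝕜 C w) (hy : HasLeadingTermAt y w (-(2 * n)) a)
    (ha : a ≠ 0) (hn : 0 < n) (hprev : HasLeadingTermAt y (w - 1) n b) :
    HasLeadingTermAt y (w + 1) n (-b) := by
  simpa using ((hy.recurrenceRhs_of_pole hB hC ha (by omega)).mono (n := n) (by omega)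
    ).add_one_of_recurrence hrec hprev

end Recurrence

theorem MeromorphicAt.eventuallyEq_nhdsNE_of_eqOn_compl_countable {𝕜 E : Type*}
    [NontriviallyNormedField 𝕜] [CompleteSpace 𝕜] [NormedAddCommGroup E] [NormedSpace 𝕜 E]
    {f g : 𝕜 → E} {x : 𝕜} {S : Set 𝕜} (hf : MeromorphicAt f x) (hg : MeromorphicAt g x)
    (hS : S.Countable) (hfg : Set.EqOn f g Sᶜ) : f =ᶠ[𝓝[≠] x] g := by
  have hoff : ∃ᶠ z in 𝓝[≠] x, z ∈ Sᶜ := by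
    rw [← mem_closure_ne_iff_frequently_within, Set.sdiff_eq, ← Set.compl_union,
      ((hS.union (Set.countable_singleton x)).dense_compl 𝕜).closure_eq]
    trivial
  have hzero := (hf.sub hg).frequently_zero_iff_eventuallyEq_zero.1
    (hoff.mono fun z hz => sub_eq_zero.2 (hfg hz))
  filter_upwards [hzero] with z hz
  exact sub_eq_zero.1 hz

theorem RatFunc.analyticAt_eval {𝕜 : Type*} [NontriviallyNormedField 𝕜] (r : RatFunc 𝕜) {x : 𝕜}
    (hx : r.denom.eval x ≠ 0) : AnalyticAt 𝕜 (fun z => r.eval (RingHom.id 𝕜) z) x :=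
  (AnalyticOnNhd.eval_polynomial r.num x trivial).div
    (AnalyticOnNhd.eval_polynomial r.denom x trivial) hx

theorem EqOffCountable.eventuallyEq_recurrenceRhs {y B C : ℂ → ℂ} {w : ℂ}
    (hy : MeromorphicOn y Set.univ) (hB : AnalyticAt ℂ B w) (hC : AnalyticAt ℂ C w)
    (heq : EqOffCountable (fun z => y (z + 1) + y (z - 1)) (recurrenceRhs B C y)) :
    (fun z => y (z + 1) + y (z - 1)) =ᶠ[𝓝[≠] w] recurrenceRhs B C y := by
  obtain ⟨S, hS, hyS⟩ := heq
  have hyw := hy w trivial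
  refine MeromorphicAt.eventuallyEq_nhdsNE_of_eqOn_compl_countable ?_
    (((hB.meromorphicAt.mul hyw).add hC.meromorphicAt).div (hyw.pow 2)) hS hyS
  exact (meromorphicAt_fun_comp_add_const_iff_meromorphicAt.2 (hy _ trivial)).add
    (meromorphicAt_fun_comp_sub_const_iff_meromorphicAt.2 (hy _ trivial))

theorem meroOrder_of_meromorphicAt {f : ℂ → ℂ} {x : ℂ} (hf : MeromorphicAt f x) :
    meroOrder f x = meromorphicOrderAt f x :=
  dif_pos hf

theorem HasLeadingTermAt.meroOrder_eq {f : ℂ → ℂ} {x a : ℂ} {n : ℤ}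
    (h : HasLeadingTermAt f x n a) (ha : a ≠ 0) : meroOrder f x = n := by
  rw [meroOrder_of_meromorphicAt h.meromorphicAt, h.meromorphicOrderAt_eq ha]

/-- Singularity pattern for meromorphic solutions of `y(z+1) + y(z-1) = (b y + c)/y²` with
rational coefficients: if `b`, `c` are analytic at `ẑ`, `ẑ+1`, `ẑ+2` with `c(ẑ) ≠ 0`, `y` has
a zero of order `k ≥ 1` at `ẑ`, and at `ẑ - 1` the function `y` is either analytic or has a
pole of order strictly less than `k`, then (i) `y` has a pole of order exactly `2k` at `ẑ+1`,
(ii) `y` has a zero of order exactly `k` at `ẑ+2`, and (iii) if moreover `c(ẑ+2) ≠ c(ẑ)`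
then `y` has a pole of order exactly `2k` at `ẑ+3`. -/
theorem meromorphic_singularity_pattern
    (y : ℂ → ℂ) (hy : MeromorphicOn y Set.univ)
    (b c : RatFunc ℂ)
    (heq : EqOffCountable (fun z => y (z + 1) + y (z - 1))
      (fun z => (b.eval (RingHom.id ℂ) z * y z + c.eval (RingHom.id ℂ) z) / y z ^ 2))
    (zhat : ℂ)
    (hb0 : b.denom.eval zhat ≠ 0) (hb1 : b.denom.eval (zhat + 1) ≠ 0)
    (hb2 : b.denom.eval (zhat + 2) ≠ 0)
    (hc0 : c.denom.eval zhat ≠ 0) (hc1 : c.denom.eval (zhat + 1) ≠ 0)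
    (hc2 : c.denom.eval (zhat + 2) ≠ 0)
    (hcval : c.eval (RingHom.id ℂ) zhat ≠ 0)
    (k : ℕ) (hk : 1 ≤ k) (hordz : meroOrder y zhat = ((k : ℤ) : WithTop ℤ))
    (hordm : ((-(k : ℤ) : ℤ) : WithTop ℤ) < meroOrder y (zhat - 1)) :
    meroOrder y (zhat + 1) = ((-(2 * (k : ℤ)) : ℤ) : WithTop ℤ) ∧
      meroOrder y (zhat + 2) = ((k : ℤ) : WithTop ℤ) ∧
      (c.eval (RingHom.id ℂ) (zhat + 2) ≠ c.eval (RingHom.id ℂ) zhat →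
        meroOrder y (zhat + 3) = ((-(2 * (k : ℤ)) : ℤ) : WithTop ℤ)) := by
  set B := fun z => b.eval (RingHom.id ℂ) z
  set C := fun z => c.eval (RingHom.id ℂ) z
  have hB (w) (hw : b.denom.eval w ≠ 0) : AnalyticAt ℂ B w := b.analyticAt_eval hw
  have hC (w) (hw : c.denom.eval w ≠ 0) : AnalyticAt ℂ C w := c.analyticAt_eval hw
  have hrec (w) (hbw : b.denom.eval w ≠ 0) (hcw : c.denom.eval w ≠ 0) :=
    heq.eventuallyEq_recurrenceRhs hy (hB w hbw) (hC w hcw)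
  have hk0 : (0 : ℤ) < k := by omega
  rw [meroOrder_of_meromorphicAt (hy _ trivial)] at hordz hordm
  obtain ⟨a, ha, h0⟩ := HasLeadingTermAt.exists_of_meromorphicOrderAt_eq (hy _ trivial) hordz
  have hm : HasLeadingTermAt y (zhat - 1) (-(2 * k)) 0 :=
    .of_lt_meromorphicOrderAt (hy _ trivial)
      (lt_trans (by exact_mod_cast (by omega : -(2 * (k : ℤ)) < -k)) hordm)
  have h1 : HasLeadingTermAt y (zhat + 1) (-(2 * k)) (C zhat / a ^ 2) := by
    simpa using h0.pole_of_zero (hrec _ hb0 hc0) (hB _ hb0) (hC _ hc0) ha hk0 hm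
  have ha1 : C zhat / a ^ 2 ≠ 0 := div_ne_zero hcval (pow_ne_zero 2 ha)
  have h2 : HasLeadingTermAt y (zhat + 2) k (-a) := by
    convert h1.zero_of_pole (hrec _ hb1 hc1) (hB _ hb1) (hC _ hc1) ha1 hk0 (by simpa using h0)
      using 1
    ring
  have h3 : HasLeadingTermAt y (zhat + 3) (-(2 * k)) ((C (zhat + 2) - C zhat) / a ^ 2) := by
    convert h2.pole_of_zero (hrec _ hb2 hc2) (hB _ hb2) (hC _ hc2) (neg_ne_zero.2 ha) hk0
      (by convert h1 using 2; ring) using 1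
    · ring
    · rw [neg_sq, sub_div]
  exact ⟨h1.meroOrder_eq ha1, h2.meroOrder_eq (neg_ne_zero.2 ha), fun hne =>
    h3.meroOrder_eq (div_ne_zero (sub_ne_zero.2 hne) (pow_ne_zero 2 ha))⟩
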